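/- Under the same assumptions, for all i ≥ 1 and 1 ≤ j ≤ K, the one-step recursion estimate holds: ((M_{σ_i}e_j)(e_j))^{1/2} ≤ ρ·((M_{σ_i}e_{j−1})(e_{j−1}))^{1/2} + (β/√r)·‖B‖_{L(U,Λ')}·L·ζ^{−i}, where e_j := λ_{σ_i} − λ_{σ_i}^{(j)}. -/

import Mathlib

/-!
Write `e = λ_{σ_i} − χ` for the current iterate `χ`. Since `Bu = −g` and `u^χ − u = A⁻¹B'(λ − χ)`,
the exact residual `B u^χ + g` is `S(λ − χ)`, which agrees with `S e` on `Λ_{σ_i}` by Galerkin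
orthogonality. Hence the new error is the exact preconditioned step applied to `e`, which the
contraction hypothesis shrinks by `ρ` in the `M`-energy norm, plus `β M⁻¹` applied to the
restriction of `B w`, where `w` is the error of the inexact solve. For `y = M⁻¹ψ` one has
`(My)(y) = ψ(y) ≤ ‖ψ‖‖y‖ ≤ ‖ψ‖ (My)(y)^{1/2} / √r`, so this perturbation has energy norm at most
`β‖B‖‖w‖/√r`; the two contributions add by the triangle inequality for the energy seminorm.
-/

namespace LinearMap.BilinForm

variable {M : Type*} [AddCommGroup M] [Module ℝ M] (B : LinearMap.BilinForm ℝ M)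

theorem sqrt_apply_add_le (hs : ∀ x, 0 ≤ B x x) (hB : LinearMap.IsSymm B) (x y : M) :
    √(B (x + y) (x + y)) ≤ √(B x x) + √(B y y) := by
  have hxy : B x y ≤ √(B x x) * √(B y y) := by
    rw [← Real.sqrt_mul (hs x)]
    exact Real.le_sqrt_of_sq_le (B.apply_sq_le_of_symm hs hB x y)
  have hexp : B (x + y) (x + y) = B x x + 2 * B x y + B y y := by
    have hyx : B y x = B x y := (hB.eq x y).symm
    simp only [map_add, LinearMap.add_apply, hyx]
    ring
  rw [Real.sqrt_le_left (by positivity), hexp, add_sq, Real.sq_sqrt (hs x), Real.sq_sqrt (hs y)]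
  linarith

end LinearMap.BilinForm

section Coercive

variable {V : Type*} [NormedAddCommGroup V] [NormedSpace ℝ V]

theorem injective_of_coercive {a : V →L[ℝ] V →L[ℝ] ℝ} {α : ℝ} (hα : 0 < α)
    (ha : ∀ v, α * ‖v‖ ^ 2 ≤ a v v) : Function.Injective a := by
  intro x y hxy
  have hzero : a (x - y) (x - y) = 0 := by simp [hxy]
  have hnorm : ‖x - y‖ ^ 2 ≤ 0 := by nlinarith [ha (x - y)]
  simpa [sub_eq_zero] using hnorm

variable {Φ : V →L[ℝ] V →L[ℝ] ℝ} {r : ℝ}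

theorem sqrt_mul_norm_le_sqrt_apply (hr : 0 < r) (hΦ : ∀ x, r * ‖x‖ ^ 2 ≤ Φ x x) (x : V) :
    √r * ‖x‖ ≤ √(Φ x x) := by
  rw [← Real.sqrt_sq (norm_nonneg x), ← Real.sqrt_mul hr.le]
  exact Real.sqrt_le_sqrt (hΦ x)

theorem sqrt_apply_le_norm_div_sqrt (hr : 0 < r) (hΦ : ∀ x, r * ‖x‖ ^ 2 ≤ Φ x x)
    {y : V} {ψ : V →L[ℝ] ℝ} (hy : ∀ μ, Φ y μ = ψ μ) : √(Φ y y) ≤ ‖ψ‖ / √r := by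
  have hsr : 0 < √r := Real.sqrt_pos.mpr hr
  have hΦy : 0 ≤ Φ y y := le_trans (by positivity) (hΦ y)
  have hsq : √(Φ y y) ^ 2 ≤ ‖ψ‖ / √r * √(Φ y y) :=
    calc √(Φ y y) ^ 2 = ψ y := by rw [Real.sq_sqrt hΦy, hy]
      _ ≤ ‖ψ‖ * ‖y‖ := (le_abs_self _).trans (ψ.le_opNorm y)
      _ ≤ ‖ψ‖ * (√(Φ y y) / √r) := by
          gcongr
          rw [le_div_iff₀ hsr, mul_comm]
          exact sqrt_mul_norm_le_sqrt_apply hr hΦ y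
      _ = ‖ψ‖ / √r * √(Φ y y) := by ring
  nlinarith [Real.sqrt_nonneg (Φ y y), div_nonneg (norm_nonneg ψ) hsr.le]

theorem sqrt_apply_add_smul_le (hsymm : ∀ x y, Φ x y = Φ y x) (hr : 0 < r)
    (hΦ : ∀ x, r * ‖x‖ ^ 2 ≤ Φ x x) {y : V} {ψ : V →L[ℝ] ℝ} (hy : ∀ μ, Φ y μ = ψ μ)
    {β : ℝ} (hβ : 0 ≤ β) (x : V) :
    √(Φ (x + β • y) (x + β • y)) ≤ √(Φ x x) + β / √r * ‖ψ‖ := by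
  have hpos : ∀ x, 0 ≤ Φ x x := fun x => le_trans (by positivity) (hΦ x)
  have hscale : √(Φ (β • y) (β • y)) = β * √(Φ y y) := by
    simp only [map_smul, smul_apply, smul_eq_mul, ← mul_assoc]
    rw [Real.sqrt_mul (mul_self_nonneg β), Real.sqrt_mul_self hβ]
  calc √(Φ (x + β • y) (x + β • y))
      ≤ √(Φ x x) + √(Φ (β • y) (β • y)) :=
        LinearMap.BilinForm.sqrt_apply_add_le Φ.toLinearMap₁₂ hpos ⟨hsymm⟩ x (β • y)
    _ ≤ √(Φ x x) + β / √r * ‖ψ‖ := by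
        rw [hscale, div_mul_eq_mul_div, mul_div_assoc]
        gcongr
        exact sqrt_apply_le_norm_div_sqrt hr hΦ hy

end Coercive

section SaddlePoint

variable {U Λ : Type*} [NormedAddCommGroup U] [NormedSpace ℝ U]
  [NormedAddCommGroup Λ] [NormedSpace ℝ Λ]
  {a : U →L[ℝ] U →L[ℝ] ℝ} {b : U →L[ℝ] Λ →L[ℝ] ℝ} {Ainv : (U →L[ℝ] ℝ) →L[ℝ] U}
  {f : U →L[ℝ] ℝ} {g : Λ →L[ℝ] ℝ} {u₀ : U} {lam : Λ}

theorem Ainv_sub_flip_eq_of_saddlePoint {α : ℝ} (hα : 0 < α) (ha : ∀ v, α * ‖v‖ ^ 2 ≤ a v v)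
    (hAinv : ∀ φ v, a (Ainv φ) v = φ v)
    (hsol : ∀ v μ, a u₀ v + b v lam + b u₀ μ = f v - g μ) :
    Ainv (f - b.flip lam) = u₀ := by
  refine injective_of_coercive hα ha (ContinuousLinearMap.ext fun v => ?_)
  have := hsol v 0
  simp only [map_zero, sub_zero, add_zero] at this
  simp [hAinv, ← this]

theorem apply_Ainv_sub_flip_add_eq {α : ℝ} (hα : 0 < α) (ha : ∀ v, α * ‖v‖ ^ 2 ≤ a v v)
    (hAinv : ∀ φ v, a (Ainv φ) v = φ v)
    (hsol : ∀ v μ, a u₀ v + b v lam + b u₀ μ = f v - g μ) (χ : Λ) :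
    b (Ainv (f - b.flip χ)) + g = b (Ainv (b.flip (lam - χ))) := by
  have hg : b u₀ = -g := ContinuousLinearMap.ext fun μ => by
    have := hsol 0 μ
    simp only [map_zero, zero_apply, zero_add] at this
    simp [this]
  have hsplit : f - b.flip χ = (f - b.flip lam) + b.flip (lam - χ) := by
    rw [map_sub]; abel
  rw [hsplit, map_add, Ainv_sub_flip_eq_of_saddlePoint hα ha hAinv hsol, map_add, hg]
  abel

theorem comp_subtypeL_apply_Ainv_flip_sub_eq {W : Submodule ℝ Λ} {lamW : Λ}
    (hGal : ∀ μ ∈ W, b (Ainv (b.flip lamW)) μ = b (Ainv (b.flip lam)) μ) (χ : Λ) :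
    (b (Ainv (b.flip (lam - χ)))).comp W.subtypeL
      = (b (Ainv (b.flip (lamW - χ)))).comp W.subtypeL := by
  ext μ
  simp [hGal μ μ.2]

end SaddlePoint

/-- Indices are shifted against the informal statement: `j < K` gives the step from `e_j` to
`e_{j+1}`, and `lamit i j` is `λ_{σ_i}^{(j)}`. -/
theorem stmt_16_general
    {U Λ : Type*} [NormedAddCommGroup U] [InnerProductSpace ℝ U]
    [NormedAddCommGroup Λ] [InnerProductSpace ℝ Λ]
    (α : ℝ) (hα : 0 < α)
    (a : U →L[ℝ] U →L[ℝ] ℝ) (b : U →L[ℝ] Λ →L[ℝ] ℝ)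
    (ha_coer : ∀ v, α * ‖v‖ ^ 2 ≤ a v v)
    (Ainv : (U →L[ℝ] ℝ) →L[ℝ] U)
    (hAinv : ∀ (φ : U →L[ℝ] ℝ) (v : U), a (Ainv φ) v = φ v)
    (f : U →L[ℝ] ℝ) (g : Λ →L[ℝ] ℝ) (u₀ : U) (lam : Λ)
    (hsol : ∀ (v : U) (μ : Λ), a u₀ v + b v lam + b u₀ μ = f v - g μ)
    (Λσ : ℕ → Submodule ℝ Λ)
    (lamσ : ℕ → Λ)
    (hGal : ∀ i, ∀ μ ∈ Λσ i, b (Ainv (b.flip (lamσ i))) μ = b (Ainv (b.flip lam)) μ)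
    (r R : ℝ) (hr : 0 < r)
    (Mp : (i : ℕ) → (Λσ i) →L[ℝ] (Λσ i) →L[ℝ] ℝ)
    (hMsymm : ∀ i, 1 ≤ i → ∀ μ ν : Λσ i, Mp i μ ν = Mp i ν μ)
    (hMbdd : ∀ i, 1 ≤ i → ∀ μ : Λσ i, r * ‖μ‖ ^ 2 ≤ Mp i μ μ ∧ Mp i μ μ ≤ R * ‖μ‖ ^ 2)
    (Minv : (i : ℕ) → ((Λσ i) →L[ℝ] ℝ) →L[ℝ] (Λσ i))
    (hMinv : ∀ i, 1 ≤ i → ∀ (ψ : (Λσ i) →L[ℝ] ℝ) (μ : Λσ i), Mp i (Minv i ψ) μ = ψ μ)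
    (β ρ : ℝ) (hβ : 0 < β)
    (hcontract : ∀ i, 1 ≤ i → ∀ μ : Λσ i,
        Real.sqrt (Mp i (μ - β • Minv i ((b (Ainv (b.flip (μ : Λ)))).comp (Λσ i).subtypeL))
            (μ - β • Minv i ((b (Ainv (b.flip (μ : Λ)))).comp (Λσ i).subtypeL)))
          ≤ ρ * Real.sqrt (Mp i μ μ))
    (ζ L : ℝ)
    (K : ℕ) (uapp : ℕ → ℕ → U) (lamit : ℕ → ℕ → Λ)
    (huapp : ∀ i, 1 ≤ i → ∀ j < K,
        ‖Ainv (f - b.flip (lamit i j)) - uapp i j‖ ≤ L * (ζ ^ i)⁻¹)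
    (hlamitstep : ∀ i, 1 ≤ i → ∀ j < K,
        lamit i (j + 1)
          = lamit i j + ((β • Minv i ((b (uapp i j) + g).comp (Λσ i).subtypeL) : Λσ i) : Λ)) :
    ∀ i, 1 ≤ i → ∀ j < K, ∀ ej ej1 : Λσ i,
      (ej : Λ) = lamσ i - lamit i j → (ej1 : Λ) = lamσ i - lamit i (j + 1) →
      Real.sqrt (Mp i ej1 ej1)
        ≤ ρ * Real.sqrt (Mp i ej ej) + (β / Real.sqrt r) * ‖b‖ * (L * (ζ ^ i)⁻¹) := by
  intro i hi j hj ej ej1 hej hej1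
  set w := Ainv (f - b.flip (lamit i j)) - uapp i j
  set δ : Λσ i →L[ℝ] ℝ := (b w).comp (Λσ i).subtypeL
  -- the inexact residual is the exact one, `S e_j`, up to the solver error `w`
  have hres : (b (uapp i j) + g).comp (Λσ i).subtypeL
      = (b (Ainv (b.flip (ej : Λ)))).comp (Λσ i).subtypeL - δ := by
    rw [hej, ← comp_subtypeL_apply_Ainv_flip_sub_eq (hGal i),
      ← apply_Ainv_sub_flip_add_eq hα ha_coer hAinv hsol]
    ext μ
    simp only [δ, w, ContinuousLinearMap.comp_apply, add_apply, sub_apply, map_sub]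
    ring
  have hstep : ej1 = (ej - β • Minv i ((b (Ainv (b.flip (ej : Λ)))).comp (Λσ i).subtypeL))
      + β • Minv i δ := by
    apply Subtype.ext
    rw [hej1, hlamitstep i hi j hj, hres, map_sub]
    push_cast
    rw [hej]
    module
  have hδ : ‖δ‖ ≤ ‖b‖ * (L * (ζ ^ i)⁻¹) :=
    calc ‖δ‖ ≤ ‖b w‖ * ‖(Λσ i).subtypeL‖ := (b w).opNorm_comp_le _
      _ ≤ ‖b w‖ := mul_le_of_le_one_right (norm_nonneg _) (Submodule.norm_subtypeL_le _)
      _ ≤ ‖b‖ * ‖w‖ := b.le_opNorm w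
      _ ≤ ‖b‖ * (L * (ζ ^ i)⁻¹) := by gcongr; exact huapp i hi j hj
  rw [hstep]
  calc _ ≤ _ := sqrt_apply_add_smul_le (hMsymm i hi) hr (fun μ => (hMbdd i hi μ).1)
          (hMinv i hi δ) hβ.le _
    _ ≤ ρ * √(Mp i ej ej) + β / √r * (‖b‖ * (L * (ζ ^ i)⁻¹)) := by
        gcongr
        exact hcontract i hi ej
    _ = _ := by ring

/-- One-step recursion estimate in the proof of Lemma basic: for all `i ≥ 1` and
`1 ≤ j ≤ K`, with `e_j := λ_{σ_i} − λ_{σ_i}^{(j)}` (an element of `Λσ i`),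
`((M_{σ_i}e_j)(e_j))^{1/2} ≤ ρ·((M_{σ_i}e_{j−1})(e_{j−1}))^{1/2} + (β/√r)·‖B‖·L·ζ^{−i}`.
(Index shifted: `j` below ranges over `0 ≤ j < K`, giving the step from `e_j` to
`e_{j+1}`.) Here `‖B‖ = ‖b‖`, `lamσ i` is the Galerkin approximation of `lam` (= λ)
from `Λσ i`, and `lamit i j` is `λ_{σ_i}^{(j)}`. -/
theorem stmt_16
    {U Λ : Type*} [NormedAddCommGroup U] [InnerProductSpace ℝ U] [CompleteSpace U]
    [NormedAddCommGroup Λ] [InnerProductSpace ℝ Λ] [CompleteSpace Λ]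
    (Ca α Cb β₀ : ℝ) (hα : 0 < α) (hβ₀ : 0 < β₀)
    (a : U →L[ℝ] U →L[ℝ] ℝ) (b : U →L[ℝ] Λ →L[ℝ] ℝ)
    (ha_bdd : ∀ u v, |a u v| ≤ Ca * ‖u‖ * ‖v‖)
    (ha_symm : ∀ u v, a u v = a v u)
    (ha_coer : ∀ v, α * ‖v‖ ^ 2 ≤ a v v)
    (hb_bdd : ∀ v μ, |b v μ| ≤ Cb * ‖v‖ * ‖μ‖)
    (hb_infsup : ∀ μ : Λ, β₀ * ‖μ‖ ≤ ⨆ w : U, b w μ / ‖w‖)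
    (Ainv : (U →L[ℝ] ℝ) →L[ℝ] U)
    (hAinv : ∀ (φ : U →L[ℝ] ℝ) (v : U), a (Ainv φ) v = φ v)
    (f : U →L[ℝ] ℝ) (g : Λ →L[ℝ] ℝ) (u₀ : U) (lam : Λ)
    (hsol : ∀ (v : U) (μ : Λ), a u₀ v + b v lam + b u₀ μ = f v - g μ)
    (Λσ : ℕ → Submodule ℝ Λ)
    (hclosed : ∀ i, IsClosed ((Λσ i : Set Λ)))
    (hbot : Λσ 0 = ⊥)
    (hnested : ∀ i, Λσ i ≤ Λσ (i + 1))
    (lamσ : ℕ → Λ) (hlamσmem : ∀ i, lamσ i ∈ Λσ i)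
    (hGal : ∀ i, ∀ μ ∈ Λσ i, b (Ainv (b.flip (lamσ i))) μ = b (Ainv (b.flip lam)) μ)
    (r R : ℝ) (hr : 0 < r) (hrR : r ≤ R)
    (Mp : (i : ℕ) → (Λσ i) →L[ℝ] (Λσ i) →L[ℝ] ℝ)
    (hMsymm : ∀ i, 1 ≤ i → ∀ μ ν : Λσ i, Mp i μ ν = Mp i ν μ)
    (hMbdd : ∀ i, 1 ≤ i → ∀ μ : Λσ i, r * ‖μ‖ ^ 2 ≤ Mp i μ μ ∧ Mp i μ μ ≤ R * ‖μ‖ ^ 2)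
    (Minv : (i : ℕ) → ((Λσ i) →L[ℝ] ℝ) →L[ℝ] (Λσ i))
    (hMinv : ∀ i, 1 ≤ i → ∀ (ψ : (Λσ i) →L[ℝ] ℝ) (μ : Λσ i), Mp i (Minv i ψ) μ = ψ μ)
    (β ρ : ℝ) (hβ : 0 < β) (hρ0 : 0 < ρ) (hρ1 : ρ < 1)
    (hcontract : ∀ i, 1 ≤ i → ∀ μ : Λσ i,
        Real.sqrt (Mp i (μ - β • Minv i ((b (Ainv (b.flip (μ : Λ)))).comp (Λσ i).subtypeL))
            (μ - β • Minv i ((b (Ainv (b.flip (μ : Λ)))).comp (Λσ i).subtypeL)))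
          ≤ ρ * Real.sqrt (Mp i μ μ))
    (ζ L : ℝ) (hζ : 1 < ζ) (hL : 0 < L)
    (happrox : ∀ i, ‖lam - lamσ i‖ ≤ L * (ζ ^ i)⁻¹)
    (K : ℕ) (uapp : ℕ → ℕ → U) (lamit : ℕ → ℕ → Λ)
    (hlamit0 : lamit 0 K = 0)
    (hlamitmem : ∀ i, 1 ≤ i → ∀ j ≤ K, lamit i j ∈ Λσ i)
    (hlamitinit : ∀ i, 1 ≤ i → lamit i 0 = lamit (i - 1) K)
    (huapp : ∀ i, 1 ≤ i → ∀ j < K,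
        ‖Ainv (f - b.flip (lamit i j)) - uapp i j‖ ≤ L * (ζ ^ i)⁻¹)
    (hlamitstep : ∀ i, 1 ≤ i → ∀ j < K,
        lamit i (j + 1)
          = lamit i j + ((β • Minv i ((b (uapp i j) + g).comp (Λσ i).subtypeL) : Λσ i) : Λ)) :
    ∀ i, 1 ≤ i → ∀ j < K, ∀ ej ej1 : Λσ i,
      (ej : Λ) = lamσ i - lamit i j → (ej1 : Λ) = lamσ i - lamit i (j + 1) →
      Real.sqrt (Mp i ej1 ej1)
        ≤ ρ * Real.sqrt (Mp i ej ej) + (β / Real.sqrt r) * ‖b‖ * (L * (ζ ^ i)⁻¹) :=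
  stmt_16_general α hα a b ha_coer Ainv hAinv f g u₀ lam hsol Λσ lamσ hGal r R hr Mp hMsymm hMbdd
    Minv hMinv β ρ hβ hcontract ζ L K uapp lamit huapp hlamitstep
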